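/- The duality theorem: for a decomposition-based log monotone E_{LM} and a CPTP map Λ, the resource-assisted entangling capacity sup_{ρ density matrix} [E_{LM}(Λ(ρ)) − E_{LM}(ρ)] is at most sup_{σ ∈ M} E_{LM}(Λ(σ)). If moreover M is contained in the set of density matrices, the two quantities are equal. -/

import Mathlib

open scoped Matrix Kronecker BigOperators ComplexOrder

/-- The set of `t ≥ 0` so that `ρ = (1+t)σ⁺ - tσ⁻` with `σ± ∈ M`. -/
def decompSet {n : Type*} [Fintype n] (M : Set (Matrix n n ℂ)) (ρ : Matrix n n ℂ) : Set ℝ :=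
  {t : ℝ | 0 ≤ t ∧ ∃ σp ∈ M, ∃ σm ∈ M, ρ = ((1 + t : ℝ) : ℂ) • σp - ((t : ℝ) : ℂ) • σm}

/-- The decomposition-based (Vidal–Werner) monotone associated to a set `M`. -/
noncomputable def Edecomp {n : Type*} [Fintype n] (M : Set (Matrix n n ℂ))
    (ρ : Matrix n n ℂ) : ℝ :=
  sInf (decompSet M ρ)

/-- The logarithmic version `E_{LM}(ρ) = log₂(1 + 2 E_M(ρ))`. -/
noncomputable def ELM {n : Type*} [Fintype n] (M : Set (Matrix n n ℂ))
    (ρ : Matrix n n ℂ) : ℝ :=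
  Real.logb 2 (1 + 2 * Edecomp M ρ)

/-- A separable (bipartite) density matrix: a finite convex combination of
products of density matrices. -/
def IsSeparableState {a b : Type*} [Fintype a] [Fintype b]
    (σ : Matrix (a × b) (a × b) ℂ) : Prop :=
  ∃ (m : ℕ) (p : Fin m → ℝ) (σA : Fin m → Matrix a a ℂ) (σB : Fin m → Matrix b b ℂ),
    (∀ i, 0 ≤ p i) ∧ (∑ i, p i) = 1 ∧
    (∀ i, (σA i).PosSemidef ∧ (σA i).trace = 1) ∧
    (∀ i, (σB i).PosSemidef ∧ (σB i).trace = 1) ∧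
    σ = ∑ i, ((p i : ℝ) : ℂ) • (σA i ⊗ₖ σB i)

/-- A completely positive trace preserving map, presented by a finite Kraus family. -/
def IsCPTP {n : Type*} [Fintype n] [DecidableEq n] (Λ : Matrix n n ℂ → Matrix n n ℂ) : Prop :=
  ∃ (m : ℕ) (K : Fin m → Matrix n n ℂ),
    (∀ ρ, Λ ρ = ∑ i, K i * ρ * (K i)ᴴ) ∧ (∑ i, (K i)ᴴ * K i) = 1

section kron
variable {a b : Type*} [Fintype a] [Fintype b] [DecidableEq a] [DecidableEq b]

lemma kron_conjT (P : Matrix a a ℂ) (Q : Matrix b b ℂ) : (P ⊗ₖ Q)ᴴ = Pᴴ ⊗ₖ Qᴴ := by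
  ext ⟨i,k⟩ ⟨j,l⟩
  simp [Matrix.conjTranspose_apply, Matrix.kroneckerMap_apply]

lemma posSemidef_kron {P : Matrix a a ℂ} {Q : Matrix b b ℂ} (hP : P.PosSemidef)
    (hQ : Q.PosSemidef) : (P ⊗ₖ Q).PosSemidef := by
  exact hP.kronecker hQ

end kron

section psd
variable {n : Type*} [Fintype n] [DecidableEq n]

lemma trace_eq_sum_eigen {A : Matrix n n ℂ} (hA : A.IsHermitian) :
    A.trace = ((∑ i, hA.eigenvalues i : ℝ) : ℂ) := by
  conv_lhs => rw [hA.spectral_theorem, Unitary.conjStarAlgAut_apply]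
  rw [Matrix.trace_mul_cycle,
    Matrix.mem_unitaryGroup_iff'.mp (hA.eigenvectorUnitary).2, one_mul,
    Matrix.trace_diagonal]
  push_cast
  rfl

lemma psd_trace_pos {A : Matrix n n ℂ} (hA : A.PosSemidef) (h0 : A ≠ 0) :
    ∃ r : ℝ, 0 < r ∧ A.trace = (r : ℂ) := by
  refine ⟨∑ i, hA.1.eigenvalues i, ?_, (trace_eq_sum_eigen hA.1).symm ▸ rfl⟩
  rcases (Finset.sum_nonneg fun i _ => hA.eigenvalues_nonneg i).lt_or_eq with h | h
  · exact h
  · exfalso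
    apply h0
    have hall : ∀ i, hA.1.eigenvalues i = 0 := by
      intro i
      have := (Finset.sum_eq_zero_iff_of_nonneg
        (fun i _ => hA.eigenvalues_nonneg i)).mp h.symm
      exact this i (Finset.mem_univ i)
    have := hA.1.spectral_theorem
    rw [show (RCLike.ofReal ∘ hA.1.eigenvalues : n → ℂ) = (fun _ => 0) from by
      funext i; simp [hall i]] at this
    rw [Matrix.diagonal_zero, map_zero] at this
    exact this

lemma psd_smul {A : Matrix n n ℂ} (hA : A.PosSemidef) {r : ℝ} (hr : 0 ≤ r) :
    ((r : ℂ) • A).PosSemidef := by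
  constructor
  · unfold Matrix.IsHermitian
    rw [Matrix.conjTranspose_smul, hA.1]
    congr 1
    simp
  · intro x
    exact (hA.smul (Complex.zero_le_real.mpr hr)).2 x

end psd

section span
variable {n : Type*} [Fintype n] [DecidableEq n]

lemma herm_mem_span_psd {A : Matrix n n ℂ} (hA : A.IsHermitian) :
    A ∈ Submodule.span ℂ {B : Matrix n n ℂ | B.PosSemidef} := by
  set U : Matrix n n ℂ := (hA.eigenvectorUnitary : Matrix n n ℂ)
  have hU : U ∈ Matrix.unitaryGroup n ℂ := hA.eigenvectorUnitary.2
  set d := hA.eigenvalues with hd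
  have hdiag : ∀ f : n → ℝ, (∀ i, 0 ≤ f i) →
      (U * Matrix.diagonal (fun i => ((f i : ℝ) : ℂ)) * star U) ∈
        Submodule.span ℂ {B : Matrix n n ℂ | B.PosSemidef} := by
    intro f hf
    apply Submodule.subset_span
    show Matrix.PosSemidef _
    rw [Matrix.star_eq_conjTranspose]
    refine Matrix.PosSemidef.mul_mul_conjTranspose_same ?_ U
    exact Matrix.PosSemidef.diagonal fun i => by
      simpa using Complex.zero_le_real.mpr (hf i)
  have h1 : A = U * Matrix.diagonal (fun i => ((max (d i) 0 : ℝ) : ℂ)) * star U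
      - U * Matrix.diagonal (fun i => ((max (-(d i)) 0 : ℝ) : ℂ)) * star U := by
    rw [← Matrix.sub_mul, ← Matrix.mul_sub, Matrix.diagonal_sub]
    have : (fun i => (((max (d i) 0 : ℝ) : ℂ) - ((max (-(d i)) 0 : ℝ) : ℂ)))
        = RCLike.ofReal ∘ d := by
      funext i
      rw [← Complex.ofReal_sub]
      have hmax : max (d i) 0 - max (-(d i)) 0 = d i := by
        rcases le_total 0 (d i) with h | h
        · rw [max_eq_left h, max_eq_right (neg_nonpos.mpr h), sub_zero]
        · rw [max_eq_right h, max_eq_left (neg_nonneg.mpr h), zero_sub, neg_neg]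
      simp [hmax]
    rw [this]
    exact hA.spectral_theorem
  rw [h1]
  exact sub_mem (hdiag _ fun i => le_max_right _ _) (hdiag _ fun i => le_max_right _ _)

lemma mem_span_psd (A : Matrix n n ℂ) :
    A ∈ Submodule.span ℂ {B : Matrix n n ℂ | B.PosSemidef} := by
  have hB : (A + Aᴴ).IsHermitian := Matrix.isHermitian_add_transpose_self A
  have hC : ((Complex.I : ℂ) • (Aᴴ - A)).IsHermitian := by
    unfold Matrix.IsHermitian
    rw [Matrix.conjTranspose_smul, Matrix.conjTranspose_sub, Matrix.conjTranspose_conjTranspose]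
    rw [show star (Complex.I) = -Complex.I by simp]
    rw [neg_smul, smul_sub, smul_sub, neg_sub]
  have key : A = ((1:ℂ)/2) • (A + Aᴴ) + (Complex.I/2) • ((Complex.I : ℂ) • (Aᴴ - A)) := by
    rw [smul_smul]
    have : (Complex.I/2) * Complex.I = -(1/2 : ℂ) := by
      rw [div_mul_eq_mul_div, Complex.I_mul_I]; norm_num
    rw [this]
    module
  rw [key]
  exact add_mem (Submodule.smul_mem _ _ (herm_mem_span_psd hB))
    (Submodule.smul_mem _ _ (herm_mem_span_psd hC))

lemma span_psd_top : Submodule.span ℂ {B : Matrix n n ℂ | B.PosSemidef} = ⊤ :=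
  eq_top_iff.mpr fun A _ => mem_span_psd A

end span

section spankron
variable {a b : Type*} [Fintype a] [Fintype b] [DecidableEq a] [DecidableEq b]

/-- The set of Kronecker products of PSD matrices. -/
def psdProds (a b : Type*) [Fintype a] [Fintype b] : Set (Matrix (a × b) (a × b) ℂ) :=
  {X | ∃ P Q, Matrix.PosSemidef P ∧ Matrix.PosSemidef Q ∧ X = P ⊗ₖ Q}

lemma kron_mem_span_psdProds (P : Matrix a a ℂ) (Q : Matrix b b ℂ) :
    P ⊗ₖ Q ∈ Submodule.span ℂ (psdProds a b) := by
  have step1 : ∀ (X : Matrix a a ℂ) (Y : Matrix b b ℂ), Y.PosSemidef →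
      X ⊗ₖ Y ∈ Submodule.span ℂ (psdProds a b) := by
    intro X Y hY
    have hX : X ∈ Submodule.span ℂ {B : Matrix a a ℂ | B.PosSemidef} := mem_span_psd X
    induction hX using Submodule.span_induction with
    | mem Z hZ => exact Submodule.subset_span ⟨Z, Y, hZ, hY, rfl⟩
    | zero => rw [Matrix.zero_kronecker]; exact Submodule.zero_mem _
    | add Z W _ _ h1 h2 => rw [Matrix.add_kronecker]; exact Submodule.add_mem _ h1 h2
    | smul c Z _ h1 => rw [Matrix.smul_kronecker]; exact Submodule.smul_mem _ _ h1
  have hQ : Q ∈ Submodule.span ℂ {B : Matrix b b ℂ | B.PosSemidef} := mem_span_psd Q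
  induction hQ using Submodule.span_induction with
  | mem Z hZ => exact step1 P Z hZ
  | zero => rw [Matrix.kronecker_zero]; exact Submodule.zero_mem _
  | add Z W _ _ h1 h2 => rw [Matrix.kronecker_add]; exact Submodule.add_mem _ h1 h2
  | smul c Z _ h1 => rw [Matrix.kronecker_smul]; exact Submodule.smul_mem _ _ h1

lemma span_psdProds_top : Submodule.span ℂ (psdProds a b) = ⊤ := by
  rw [eq_top_iff]
  intro A _
  rw [Matrix.matrix_eq_sum_single A]
  apply Submodule.sum_mem _ (fun i _ => Submodule.sum_mem _ (fun j _ => ?_))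
  have : Matrix.single i j (A i j)
      = A i j • (Matrix.single i.1 j.1 (1:ℂ) ⊗ₖ Matrix.single i.2 j.2 (1:ℂ)) := by
    ext ⟨p,q⟩ ⟨r,s⟩
    simp only [Matrix.smul_apply, Matrix.kroneckerMap_apply, Matrix.single,
      Matrix.of_apply, smul_eq_mul, Prod.mk.injEq]
    by_cases h1 : i.1 = p <;> by_cases h2 : i.2 = q <;> by_cases h3 : j.1 = r <;>
      by_cases h4 : j.2 = s <;>
      simp [h1, h2, h3, h4, Prod.ext_iff]
  rw [this]
  exact Submodule.smul_mem _ _ (kron_mem_span_psdProds _ _)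

end spankron

lemma max_sub_max_neg (x : ℝ) : max x 0 - max (-x) 0 = x := by
  rcases le_total 0 x with h | h
  · rw [max_eq_left h, max_eq_right (neg_nonpos.mpr h), sub_zero]
  · rw [max_eq_right h, max_eq_left (neg_nonneg.mpr h), zero_sub, neg_neg]

lemma real_smul_eq {n m : Type*} (r : ℝ) (A : Matrix n m ℂ) : ((r : ℝ) : ℂ) • A = r • A := by
  rw [show ((r:ℝ):ℂ) = algebraMap ℝ ℂ r from rfl, algebraMap_smul]

section decomp
variable {a b : Type*} [Fintype a] [Fintype b] [DecidableEq a] [DecidableEq b]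

lemma exists_decomp_bound (M : Set (Matrix (a × b) (a × b) ℂ))
    (hconv : Convex ℝ M)
    (hsep : ∀ σ : Matrix (a × b) (a × b) ℂ, IsSeparableState σ → σ ∈ M) :
    ∃ f : Matrix (a × b) (a × b) ℂ → ℝ, Continuous f ∧
      ∀ ρ : Matrix (a × b) (a × b) ℂ, ρ.IsHermitian → ρ.trace = 1 →
        ∃ t ∈ decompSet M ρ, t ≤ f ρ := by
  classical
  -- extract a basis of PSD products
  obtain ⟨s, hs_sub, hs_span, hs_li⟩ := exists_linearIndependent ℂ (psdProds a b)
  have hfin : s.Finite := hs_li.setFinite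
  haveI : Fintype s := hfin.fintype
  have hspan_top : ⊤ ≤ Submodule.span ℂ (Set.range (Subtype.val : s → _)) := by
    rw [Subtype.range_coe, hs_span, span_psdProds_top]
  let β : Module.Basis s ℂ (Matrix (a × b) (a × b) ℂ) := Module.Basis.mk hs_li hspan_top
  have hβ : ∀ x : s, β x = x.1 := fun x => Module.Basis.mk_apply hs_li hspan_top x
  -- each basis vector is PSD with positive trace
  have hxpsd : ∀ x : s, (x.1 : Matrix (a × b) (a × b) ℂ).PosSemidef := by
    intro x
    obtain ⟨P, Q, hP, hQ, hPQ⟩ := hs_sub x.2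
    rw [hPQ]; exact posSemidef_kron hP hQ
  have hxne : ∀ x : s, (x.1 : Matrix (a × b) (a × b) ℂ) ≠ 0 := by
    intro x h
    exact β.ne_zero x (by rw [hβ, h])
  choose r hr htrace using fun x : s => psd_trace_pos (hxpsd x) (hxne x)
  -- normalized basis states
  let D : s → Matrix (a × b) (a × b) ℂ := fun x => (((r x)⁻¹ : ℝ) : ℂ) • x.1
  have hDtrace : ∀ x : s, (D x).trace = 1 := by
    intro x
    rw [Matrix.trace_smul, htrace x, smul_eq_mul, ← Complex.ofReal_mul,
      inv_mul_cancel₀ (hr x).ne']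
    norm_num
  have hDM : ∀ x : s, D x ∈ M := by
    intro x
    obtain ⟨P, Q, hP, hQ, hPQ⟩ := hs_sub x.2
    have hPne : P ≠ 0 := fun h => hxne x (by rw [hPQ, h, Matrix.zero_kronecker])
    have hQne : Q ≠ 0 := fun h => hxne x (by rw [hPQ, h, Matrix.kronecker_zero])
    obtain ⟨p, hp, hptr⟩ := psd_trace_pos hP hPne
    obtain ⟨q, hq, hqtr⟩ := psd_trace_pos hQ hQne
    have hrpq : r x = p * q := by
      have := htrace x
      rw [hPQ, Matrix.trace_kronecker, hptr, hqtr, ← Complex.ofReal_mul] at this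
      exact_mod_cast this.symm
    apply hsep
    refine ⟨1, fun _ => 1, fun _ => ((p⁻¹ : ℝ) : ℂ) • P, fun _ => ((q⁻¹ : ℝ) : ℂ) • Q,
      fun _ => zero_le_one, by simp, fun _ => ⟨psd_smul hP (by positivity), ?_⟩,
      fun _ => ⟨psd_smul hQ (by positivity), ?_⟩, ?_⟩
    · rw [Matrix.trace_smul, hptr, smul_eq_mul]; push_cast; field_simp
    · rw [Matrix.trace_smul, hqtr, smul_eq_mul]; push_cast; field_simp
    · rw [Finset.sum_const, Finset.card_univ, Fintype.card_fin, one_smul,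
        Matrix.smul_kronecker, Matrix.kronecker_smul, smul_smul, smul_smul]
      show (((r x)⁻¹ : ℝ) : ℂ) • (x.1) = _
      rw [hPQ, hrpq]
      congr 1
      push_cast
      rw [mul_inv]
      ring
  -- the bound function
  refine ⟨fun ρ => ∑ x : s, |(β.repr ρ x).re| * r x, ?_, ?_⟩
  · apply continuous_finset_sum
    intro x _
    have hL : Continuous fun ρ : Matrix (a × b) (a × b) ℂ => β.repr ρ x := by
      exact LinearMap.continuous_of_finiteDimensional
        ((Finsupp.lapply x).comp (β.repr : _ ≃ₗ[ℂ] _).toLinearMap)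
    exact ((Complex.continuous_re.comp hL).abs).mul continuous_const
  intro ρ hherm htr1
  set c : s → ℝ := fun x => (β.repr ρ x).re * r x with hc
  -- ρ is a real combination of the D x
  have hrepr : ρ = ∑ x : s, ((c x : ℝ) : ℂ) • D x := by
    have h1 : ρ = ∑ x : s, (β.repr ρ x) • x.1 := by
      conv_lhs => rw [← β.sum_repr ρ]
      exact Finset.sum_congr rfl fun x _ => by rw [hβ]
    have h2 : ρ = ∑ x : s, (starRingEnd ℂ (β.repr ρ x)) • x.1 := by
      conv_lhs => rw [← hherm]
      conv_lhs => rw [h1]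
      rw [Matrix.conjTranspose_sum]
      exact Finset.sum_congr rfl fun x _ => by
        rw [Matrix.conjTranspose_smul, (hxpsd x).isHermitian]; rfl
    have h2' : ∀ y : s, starRingEnd ℂ (β.repr ρ y) = β.repr ρ y := by
      intro y
      conv_rhs => rw [h2]
      rw [show (∑ x : s, (starRingEnd ℂ) (β.repr ρ x) • (x.1 : Matrix (a × b) (a × b) ℂ))
            = ∑ x : s, (starRingEnd ℂ) (β.repr ρ x) • β x from
          Finset.sum_congr rfl fun x _ => by rw [hβ]]
      rw [map_sum]
      simp [Module.Basis.repr_self, Finsupp.single_apply, Finsupp.finset_sum_apply]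
    have hcoord : ∀ y : s, (β.repr ρ y) = (((β.repr ρ y).re : ℝ) : ℂ) := fun y =>
      (Complex.conj_eq_iff_re.mp (h2' y)).symm
    have h3 : ρ = ∑ x : s, (((β.repr ρ x).re : ℝ) : ℂ) • x.1 := by
      conv_lhs => rw [h1]
      exact Finset.sum_congr rfl fun x _ => by rw [← hcoord x]
    conv_lhs => rw [h3]
    refine Finset.sum_congr rfl fun x _ => ?_
    show _ = ((c x : ℝ) : ℂ) • ((((r x)⁻¹ : ℝ) : ℂ) • x.1)
    rw [smul_smul, ← Complex.ofReal_mul]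
    congr 2
    show (β.repr ρ x).re = ((β.repr ρ x).re * r x) * (r x)⁻¹
    rw [mul_assoc, mul_inv_cancel₀ (hr x).ne', mul_one]
  -- the sum of the coefficients is 1
  have hsumc : ∑ x : s, c x = 1 := by
    have : ρ.trace = ((∑ x : s, c x : ℝ) : ℂ) := by
      conv_lhs => rw [hrepr]
      rw [Matrix.trace_sum]
      push_cast
      exact Finset.sum_congr rfl fun x _ => by
        rw [Matrix.trace_smul, hDtrace x, smul_eq_mul, mul_one]
    rw [htr1] at this
    exact_mod_cast this.symm
  set t : ℝ := ∑ x : s, max (-(c x)) 0 with ht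
  have htnn : 0 ≤ t := Finset.sum_nonneg fun x _ => le_max_right _ _
  have hsum_pos : ∑ x : s, max (c x) 0 = 1 + t := by
    have hdiff : ∑ x : s, max (c x) 0 - t = 1 := by
      rw [ht, ← Finset.sum_sub_distrib,
        Finset.sum_congr rfl fun x _ => max_sub_max_neg (c x)]
      exact hsumc
    linarith
  have hle : t ≤ ∑ x : s, |(β.repr ρ x).re| * r x := by
    rw [ht]
    refine Finset.sum_le_sum fun x _ => ?_
    have : max (-(c x)) 0 ≤ |c x| := max_le (neg_le_abs _) (abs_nonneg _)
    calc max (-(c x)) 0 ≤ |c x| := this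
      _ = |(β.repr ρ x).re| * r x := by
          rw [hc]; simp only []
          rw [abs_mul, abs_of_pos (hr x)]
  refine ⟨t, ⟨htnn, ?_⟩, hle⟩
  by_cases ht0 : t = 0
  · have hcnn : ∀ x : s, 0 ≤ c x := by
      intro x
      by_contra hneg
      push_neg at hneg
      have h1 : 0 < max (-(c x)) 0 := lt_max_iff.mpr (Or.inl (by linarith))
      have h2 : max (-(c x)) 0 ≤ t :=
        ht ▸ Finset.single_le_sum (f := fun x : s => max (-(c x)) 0)
          (fun y _ => le_max_right _ _) (Finset.mem_univ x)
      linarith [ht0 ▸ (h1.trans_le h2)]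
    have hρM : ρ ∈ M := by
      rw [hrepr, Finset.sum_congr rfl fun x _ => real_smul_eq (c x) (D x)]
      exact hconv.sum_mem (fun x _ => hcnn x) hsumc (fun x _ => hDM x)
    refine ⟨ρ, hρM, ρ, hρM, ?_⟩
    rw [ht0]
    norm_num
  · have htpos : 0 < t := lt_of_le_of_ne htnn (Ne.symm ht0)
    have h1t : (0:ℝ) < 1 + t := by linarith
    set wm : s → ℝ := fun x => max (-(c x)) 0 / t with hwm
    set wp : s → ℝ := fun x => max (c x) 0 / (1 + t) with hwp
    have hσm : (∑ x : s, wm x • D x) ∈ M := by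
      refine hconv.sum_mem (fun x _ => by positivity) ?_ (fun x _ => hDM x)
      rw [hwm, ← Finset.sum_div, ← ht, div_self ht0]
    have hσp : (∑ x : s, wp x • D x) ∈ M := by
      refine hconv.sum_mem (fun x _ => by positivity) ?_ (fun x _ => hDM x)
      rw [hwp, ← Finset.sum_div, hsum_pos, div_self h1t.ne']
    refine ⟨∑ x : s, wp x • D x, hσp, ∑ x : s, wm x • D x, hσm, ?_⟩
    rw [hrepr, real_smul_eq, real_smul_eq, Finset.smul_sum, Finset.smul_sum,
      ← Finset.sum_sub_distrib]
    refine Finset.sum_congr rfl fun x _ => ?_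
    rw [real_smul_eq, smul_smul, smul_smul, ← sub_smul]
    congr 1
    show c x = (1 + t) * wp x - t * wm x
    rw [hwp, hwm]
    simp only []
    rw [mul_comm ((1:ℝ)+t), div_mul_cancel₀ _ h1t.ne', mul_comm t,
      div_mul_cancel₀ _ ht0, max_sub_max_neg]
end decomp

section efacts
variable {n : Type*} [Fintype n] {M : Set (Matrix n n ℂ)} {ρ : Matrix n n ℂ}

lemma decompSet_bddBelow (M : Set (Matrix n n ℂ)) (ρ : Matrix n n ℂ) :
    BddBelow (decompSet M ρ) := ⟨0, fun _ ht => ht.1⟩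

lemma Edecomp_nonneg (M : Set (Matrix n n ℂ)) (ρ : Matrix n n ℂ) : 0 ≤ Edecomp M ρ :=
  Real.sInf_nonneg fun _ ht => ht.1

lemma Edecomp_le {t : ℝ} (h : t ∈ decompSet M ρ) : Edecomp M ρ ≤ t :=
  csInf_le (decompSet_bddBelow M ρ) h

lemma one_add_two_Edecomp_pos (M : Set (Matrix n n ℂ)) (ρ : Matrix n n ℂ) :
    (0:ℝ) < 1 + 2 * Edecomp M ρ := by linarith [Edecomp_nonneg M ρ]

lemma ELM_nonneg (M : Set (Matrix n n ℂ)) (ρ : Matrix n n ℂ) : 0 ≤ ELM M ρ :=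
  Real.logb_nonneg one_lt_two (by linarith [Edecomp_nonneg M ρ])

lemma Edecomp_eq_zero_of_mem (h : ρ ∈ M) : Edecomp M ρ = 0 :=
  le_antisymm (Edecomp_le ⟨le_refl 0, ρ, h, ρ, h, by norm_num⟩) (Edecomp_nonneg M ρ)

lemma ELM_eq_zero_of_mem (h : ρ ∈ M) : ELM M ρ = 0 := by
  rw [ELM, Edecomp_eq_zero_of_mem h]
  norm_num

end efacts

set_option maxHeartbeats 1000000 in
theorem duality_theorem
    {a b : Type*} [Fintype a] [Fintype b] [DecidableEq a] [DecidableEq b]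
    (M : Set (Matrix (a × b) (a × b) ℂ))
    (hcomp : IsCompact M) (hconv : Convex ℝ M)
    (hherm : ∀ σ ∈ M, σ.IsHermitian) (htr : ∀ σ ∈ M, σ.trace = 1)
    (hsep : ∀ σ : Matrix (a × b) (a × b) ℂ, IsSeparableState σ → σ ∈ M)
    (hlu : ∀ (UA : Matrix a a ℂ) (UB : Matrix b b ℂ),
      UA ∈ Matrix.unitaryGroup a ℂ → UB ∈ Matrix.unitaryGroup b ℂ →
      ∀ σ ∈ M, (UA ⊗ₖ UB) * σ * (UA ⊗ₖ UB)ᴴ ∈ M)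
    (Λ : Matrix (a × b) (a × b) ℂ → Matrix (a × b) (a × b) ℂ)
    (hΛ : IsCPTP Λ) :
    sSup {x : ℝ | ∃ ρ : Matrix (a × b) (a × b) ℂ,
        ρ.PosSemidef ∧ ρ.trace = 1 ∧ x = ELM M (Λ ρ) - ELM M ρ}
      ≤ sSup {x : ℝ | ∃ σ ∈ M, x = ELM M (Λ σ)} ∧
    ((∀ σ ∈ M, σ.PosSemidef) →
      sSup {x : ℝ | ∃ ρ : Matrix (a × b) (a × b) ℂ,
          ρ.PosSemidef ∧ ρ.trace = 1 ∧ x = ELM M (Λ ρ) - ELM M ρ}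
        = sSup {x : ℝ | ∃ σ ∈ M, x = ELM M (Λ σ)}) := by
  classical
  set S1 := {x : ℝ | ∃ ρ : Matrix (a × b) (a × b) ℂ,
      ρ.PosSemidef ∧ ρ.trace = 1 ∧ x = ELM M (Λ ρ) - ELM M ρ} with hS1
  set S2 := {x : ℝ | ∃ σ ∈ M, x = ELM M (Λ σ)} with hS2
  have hL0 : 0 ≤ sSup S2 := Real.sSup_nonneg fun x hx => by
    obtain ⟨σ, hσ, rfl⟩ := hx; exact ELM_nonneg M (Λ σ)
  by_cases hne : Nonempty (a × b)
  swap
  · have hemp : IsEmpty (a × b) := not_nonempty_iff.mp hne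
    have h1 : S1 = ∅ := by
      ext x
      simp only [hS1, Set.mem_setOf_eq, Set.mem_empty_iff_false, iff_false, not_exists]
      rintro ρ ⟨-, htr1, -⟩
      have h0 : ρ.trace = 0 := by simp [Matrix.trace]
      rw [h0] at htr1
      exact zero_ne_one htr1
    have h2 : S2 = ∅ := by
      ext x
      simp only [hS2, Set.mem_setOf_eq, Set.mem_empty_iff_false, iff_false, not_exists]
      rintro σ ⟨hσ, -⟩
      have h0 : σ.trace = 0 := by simp [Matrix.trace]
      have := htr σ hσ
      rw [h0] at this
      exact zero_ne_one this
    rw [h1, h2]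
    exact ⟨le_rfl, fun _ => rfl⟩
  -- main case
  obtain ⟨m, K, hK, hK1⟩ := hΛ
  have hΛtr : ∀ A : Matrix (a × b) (a × b) ℂ, (Λ A).trace = A.trace := by
    intro A
    rw [hK, Matrix.trace_sum]
    calc ∑ i, (K i * A * (K i)ᴴ).trace = ∑ i, ((K i)ᴴ * K i * A).trace :=
          Finset.sum_congr rfl fun i _ => Matrix.trace_mul_cycle (K i) A (K i)ᴴ
      _ = ((∑ i, (K i)ᴴ * K i) * A).trace := by rw [Finset.sum_mul, Matrix.trace_sum]
      _ = A.trace := by rw [hK1, one_mul]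
  have hΛherm : ∀ A : Matrix (a × b) (a × b) ℂ, A.IsHermitian → (Λ A).IsHermitian := by
    intro A hA
    rw [hK]
    show _ = _
    rw [Matrix.conjTranspose_sum]
    exact Finset.sum_congr rfl fun i _ => by
      simp [Matrix.conjTranspose_mul, Matrix.mul_assoc, hA.eq]
  have hΛlin : ∀ (x y : ℝ) (A B : Matrix (a × b) (a × b) ℂ),
      Λ (((x : ℝ) : ℂ) • A - ((y : ℝ) : ℂ) • B)
        = ((x : ℝ) : ℂ) • Λ A - ((y : ℝ) : ℂ) • Λ B := by
    intro x y A B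
    simp only [hK, Matrix.mul_sub, Matrix.sub_mul, Matrix.mul_smul, Matrix.smul_mul,
      Finset.sum_sub_distrib, Finset.smul_sum]
  have hΛcont : Continuous Λ := by
    rw [show Λ = fun ρ => ∑ i, K i * ρ * (K i)ᴴ from funext hK]
    exact continuous_finset_sum _ fun i _ =>
      (continuous_const.matrix_mul continuous_id).matrix_mul continuous_const
  obtain ⟨f, hfcont, hf⟩ := exists_decomp_bound M hconv hsep
  have hdec_ne : ∀ ρ : Matrix (a × b) (a × b) ℂ, ρ.IsHermitian → ρ.trace = 1 →
      (decompSet M ρ).Nonempty := fun ρ h1 h2 => ((hf ρ h1 h2).imp fun t ht => ht.1)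
  have hEf : ∀ ρ : Matrix (a × b) (a × b) ℂ, ρ.IsHermitian → ρ.trace = 1 →
      Edecomp M ρ ≤ f ρ := by
    intro ρ h1 h2
    obtain ⟨t, htmem, htle⟩ := hf ρ h1 h2
    exact (Edecomp_le htmem).trans htle
  have hbdd2 : BddAbove S2 := by
    have hcompim : IsCompact (f '' (Λ '' M)) := (hcomp.image hΛcont).image hfcont
    obtain ⟨C, hC⟩ := hcompim.bddAbove
    refine ⟨Real.logb 2 (1 + 2 * max C 0), ?_⟩
    rintro x ⟨σ, hσ, rfl⟩
    have h1 := hΛherm σ (hherm σ hσ)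
    have h2 : (Λ σ).trace = 1 := by rw [hΛtr]; exact htr σ hσ
    have h3 : Edecomp M (Λ σ) ≤ max C 0 := by
      refine (hEf _ h1 h2).trans (le_max_of_le_left ?_)
      exact hC ⟨Λ σ, Set.mem_image_of_mem Λ hσ, rfl⟩
    have h4 := one_add_two_Edecomp_pos M (Λ σ)
    exact (Real.logb_le_logb one_lt_two h4
      (by linarith [le_max_right C 0])).mpr (by linarith)
  set L := sSup S2 with hL
  have key : ∀ ρ : Matrix (a × b) (a × b) ℂ, ρ.IsHermitian → ρ.trace = 1 →
      ELM M (Λ ρ) ≤ ELM M ρ + L := by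
    intro ρ hh htr1
    have hΛρherm := hΛherm ρ hh
    have hΛρtr : (Λ ρ).trace = 1 := by rw [hΛtr]; exact htr1
    have main : ∀ ε : ℝ, 0 < ε →
        1 + 2 * Edecomp M (Λ ρ) ≤ (1 + 2 * Edecomp M ρ + 2 * ε) * ((2:ℝ) ^ L + 2 * ε) := by
      intro ε hε
      have hlt1 : sInf (decompSet M ρ) < Edecomp M ρ + ε := by
        rw [show sInf (decompSet M ρ) = Edecomp M ρ from rfl]; linarith
      obtain ⟨s0, hs0mem, hs0lt⟩ :=
        (csInf_lt_iff (decompSet_bddBelow M ρ) (hdec_ne ρ hh htr1)).mp hlt1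
      obtain ⟨hs0nn, σp, hσp, σm, hσm, hρdec⟩ := hs0mem
      have hσpH := hΛherm σp (hherm σp hσp)
      have hσptr : (Λ σp).trace = 1 := by rw [hΛtr]; exact htr σp hσp
      have hσmH := hΛherm σm (hherm σm hσm)
      have hσmtr : (Λ σm).trace = 1 := by rw [hΛtr]; exact htr σm hσm
      have hlt2 : sInf (decompSet M (Λ σp)) < Edecomp M (Λ σp) + ε := by
        rw [show sInf (decompSet M (Λ σp)) = Edecomp M (Λ σp) from rfl]; linarith
      obtain ⟨u, humem, hult⟩ :=
        (csInf_lt_iff (decompSet_bddBelow M (Λ σp)) (hdec_ne _ hσpH hσptr)).mp hlt2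
      obtain ⟨hunn, τp, hτp, τm, hτm, hpdec⟩ := humem
      have hlt3 : sInf (decompSet M (Λ σm)) < Edecomp M (Λ σm) + ε := by
        rw [show sInf (decompSet M (Λ σm)) = Edecomp M (Λ σm) from rfl]; linarith
      obtain ⟨v, hvmem, hvlt⟩ :=
        (csInf_lt_iff (decompSet_bddBelow M (Λ σm)) (hdec_ne _ hσmH hσmtr)).mp hlt3
      obtain ⟨hvnn, ωp, hωp, ωm, hωm, hmdec⟩ := hvmem
      have hup2 : 1 + 2 * Edecomp M (Λ σp) ≤ (2:ℝ) ^ L := by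
        have hmem : ELM M (Λ σp) ∈ S2 := ⟨σp, hσp, rfl⟩
        have hle := le_csSup hbdd2 hmem
        rw [← hL] at hle
        exact (Real.logb_le_iff_le_rpow one_lt_two
          (one_add_two_Edecomp_pos M (Λ σp))).mp hle
      have hvp2 : 1 + 2 * Edecomp M (Λ σm) ≤ (2:ℝ) ^ L := by
        have hmem : ELM M (Λ σm) ∈ S2 := ⟨σm, hσm, rfl⟩
        have hle := le_csSup hbdd2 hmem
        rw [← hL] at hle
        exact (Real.logb_le_iff_le_rpow one_lt_two
          (one_add_two_Edecomp_pos M (Λ σm))).mp hle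
      set N := (1 + s0) * u + s0 * (1 + v) with hN
      have h1s0 : (0:ℝ) ≤ 1 + s0 := by linarith
      have h1v : (0:ℝ) ≤ 1 + v := by linarith
      have hNnn : 0 ≤ N := by
        have := mul_nonneg h1s0 hunn
        have := mul_nonneg hs0nn h1v
        linarith
      have hEle : Edecomp M (Λ ρ) ≤ N := by
        apply Edecomp_le
        by_cases hN0 : N = 0
        · have h1 : (1 + s0) * u = 0 ∧ s0 * (1 + v) = 0 := by
            constructor <;> nlinarith [mul_nonneg h1s0 hunn, mul_nonneg hs0nn h1v]
          have hs00 : s0 = 0 := by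
            rcases mul_eq_zero.mp h1.2 with h | h
            · exact h
            · linarith
          have hu0 : u = 0 := by
            rcases mul_eq_zero.mp h1.1 with h | h
            · linarith
            · exact h
          have hρσp : ρ = σp := by rw [hρdec, hs00]; norm_num
          have hΛρ : Λ ρ = τp := by rw [hρσp, hpdec, hu0]; norm_num
          exact ⟨by rw [hN0], τp, hτp, τp, hτp, by rw [hN0, hΛρ]; norm_num⟩
        · have hNpos : 0 < N := lt_of_le_of_ne hNnn (Ne.symm hN0)
          have h1N : (0:ℝ) < 1 + N := by linarith
          set cp1 := (1 + s0) * (1 + u) / (1 + N) with hcp1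
          set cp2 := s0 * v / (1 + N) with hcp2
          set cm1 := (1 + s0) * u / N with hcm1
          set cm2 := s0 * (1 + v) / N with hcm2
          have hppos : cp1 • τp + cp2 • ωm ∈ M := by
            refine hconv hτp hωm
              (div_nonneg (mul_nonneg h1s0 (by linarith)) h1N.le)
              (div_nonneg (mul_nonneg hs0nn hvnn) h1N.le) ?_
            rw [hcp1, hcp2, ← add_div,
              show (1 + s0) * (1 + u) + s0 * v = 1 + N by rw [hN]; ring]
            exact div_self h1N.ne'
          have hmpos : cm1 • τm + cm2 • ωp ∈ M := by
            refine hconv hτm hωp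
              (div_nonneg (mul_nonneg h1s0 hunn) hNpos.le)
              (div_nonneg (mul_nonneg hs0nn h1v) hNpos.le) ?_
            rw [hcm1, hcm2, ← add_div, ← hN]
            exact div_self hN0
          refine ⟨hNnn, cp1 • τp + cp2 • ωm, hppos, cm1 • τm + cm2 • ωp, hmpos, ?_⟩
          have e1 : ((1 + N : ℝ) : ℂ) • (cp1 • τp + cp2 • ωm)
              = ((1 + s0) * (1 + u)) • τp + (s0 * v) • ωm := by
            rw [real_smul_eq, smul_add, smul_smul, smul_smul]
            rw [hcp1, hcp2, mul_comm (1+N), div_mul_cancel₀ _ h1N.ne',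
              mul_comm (1+N), div_mul_cancel₀ _ h1N.ne']
          have e2 : ((N : ℝ) : ℂ) • (cm1 • τm + cm2 • ωp)
              = ((1 + s0) * u) • τm + (s0 * (1 + v)) • ωp := by
            rw [real_smul_eq, smul_add, smul_smul, smul_smul]
            rw [hcm1, hcm2, mul_comm N, div_mul_cancel₀ _ hN0,
              mul_comm N, div_mul_cancel₀ _ hN0]
          rw [hρdec, hΛlin, hpdec, hmdec, e1, e2]
          simp only [real_smul_eq]
          module
      have hB : (0:ℝ) < (2:ℝ) ^ L := Real.rpow_pos_of_pos two_pos L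
      have h1 : 1 + 2 * u ≤ (2:ℝ) ^ L + 2 * ε := by linarith
      have h2 : 1 + 2 * v ≤ (2:ℝ) ^ L + 2 * ε := by linarith
      have hstep : 1 + 2 * N ≤ (1 + 2 * s0) * ((2:ℝ) ^ L + 2 * ε) := by
        nlinarith [mul_le_mul_of_nonneg_left h1 h1s0, mul_le_mul_of_nonneg_left h2 hs0nn]
      calc 1 + 2 * Edecomp M (Λ ρ) ≤ 1 + 2 * N := by linarith
        _ ≤ (1 + 2 * s0) * ((2:ℝ) ^ L + 2 * ε) := hstep
        _ ≤ (1 + 2 * Edecomp M ρ + 2 * ε) * ((2:ℝ) ^ L + 2 * ε) := by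
            apply mul_le_mul_of_nonneg_right (by linarith) (by linarith)
    have hlim : 1 + 2 * Edecomp M (Λ ρ) ≤ (1 + 2 * Edecomp M ρ) * (2:ℝ) ^ L := by
      have hT : Filter.Tendsto
          (fun ε : ℝ => (1 + 2 * Edecomp M ρ + 2 * ε) * ((2:ℝ) ^ L + 2 * ε))
          (nhdsWithin 0 (Set.Ioi 0))
          (nhds ((1 + 2 * Edecomp M ρ + 2 * 0) * ((2:ℝ) ^ L + 2 * 0))) := by
        apply Filter.Tendsto.mono_left _ nhdsWithin_le_nhds
        exact Continuous.tendsto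
          ((continuous_const.add (continuous_const.mul continuous_id)).mul
            (continuous_const.add (continuous_const.mul continuous_id))) 0
      rw [show (1 + 2 * Edecomp M ρ + 2 * 0) * ((2:ℝ) ^ L + 2 * 0)
          = (1 + 2 * Edecomp M ρ) * (2:ℝ) ^ L by ring] at hT
      exact ge_of_tendsto hT
        (Filter.eventually_of_mem self_mem_nhdsWithin fun ε hε => main ε hε)
    have hpos1 := one_add_two_Edecomp_pos M (Λ ρ)
    have hpos2 := one_add_two_Edecomp_pos M ρ
    have hBpos : (0:ℝ) < (2:ℝ) ^ L := Real.rpow_pos_of_pos two_pos L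
    rw [ELM, ELM]
    calc Real.logb 2 (1 + 2 * Edecomp M (Λ ρ))
        ≤ Real.logb 2 ((1 + 2 * Edecomp M ρ) * (2:ℝ) ^ L) :=
          (Real.logb_le_logb one_lt_two hpos1 (by positivity)).mpr hlim
      _ = Real.logb 2 (1 + 2 * Edecomp M ρ) + Real.logb 2 ((2:ℝ) ^ L) :=
          Real.logb_mul hpos2.ne' hBpos.ne'
      _ = Real.logb 2 (1 + 2 * Edecomp M ρ) + L := by
          rw [Real.logb_rpow (by norm_num) (by norm_num)]
  have part1 : sSup S1 ≤ L := by
    apply Real.sSup_le _ hL0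
    rintro x ⟨ρ, hpsd, htr1, rfl⟩
    have := key ρ hpsd.isHermitian htr1
    linarith [ELM_nonneg M ρ]
  refine ⟨part1, fun hpsdM => ?_⟩
  refine le_antisymm part1 ?_
  have hsub : S2 ⊆ S1 := by
    rintro x ⟨σ, hσ, rfl⟩
    exact ⟨σ, hpsdM σ hσ, htr σ hσ, by rw [ELM_eq_zero_of_mem hσ, sub_zero]⟩
  have hS2ne : S2.Nonempty := by
    haveI : Nonempty a := ⟨hne.some.1⟩
    haveI : Nonempty b := ⟨hne.some.2⟩
    set σA : Matrix a a ℂ := (((Fintype.card a : ℝ)⁻¹ : ℝ) : ℂ) • 1 with hσA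
    set σB : Matrix b b ℂ := (((Fintype.card b : ℝ)⁻¹ : ℝ) : ℂ) • 1 with hσB
    have hσ0 : σA ⊗ₖ σB ∈ M := by
      apply hsep
      refine ⟨1, fun _ => 1, fun _ => σA, fun _ => σB, fun _ => zero_le_one, by simp,
        fun _ => ⟨psd_smul Matrix.PosSemidef.one (by positivity), ?_⟩,
        fun _ => ⟨psd_smul Matrix.PosSemidef.one (by positivity), ?_⟩, by simp⟩
      · rw [hσA, Matrix.trace_smul, Matrix.trace_one, smul_eq_mul]
        push_cast
        rw [inv_mul_cancel₀]
        exact_mod_cast Nat.cast_ne_zero.mpr Fintype.card_ne_zero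
      · rw [hσB, Matrix.trace_smul, Matrix.trace_one, smul_eq_mul]
        push_cast
        rw [inv_mul_cancel₀]
        exact_mod_cast Nat.cast_ne_zero.mpr Fintype.card_ne_zero
    exact ⟨ELM M (Λ (σA ⊗ₖ σB)), σA ⊗ₖ σB, hσ0, rfl⟩
  have hbdd1 : BddAbove S1 := by
    refine ⟨L, ?_⟩
    rintro x ⟨ρ, hpsd, htr1, rfl⟩
    have := key ρ hpsd.isHermitian htr1
    linarith [ELM_nonneg M ρ]
  exact csSup_le_csSup hbdd1 hS2ne hsub
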